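/- Let r : 𝔤* → 𝔤 be a skew-symmetric linear map satisfying the classical Yang–Baxter equation [r,r] = 0. Then the r-bracket [α,β]_r := ad*_{r(α)}β - ad*_{r(β)}α is a Lie bracket on 𝔤*: it is bilinear, antisymmetric, and satisfies the Jacobi identity. -/

import Mathlib

/-! The CYBE for a skew-symmetric `r` says exactly that `r` intertwines the `r`-bracket with the
Lie bracket, `r [α, β]_r = [r α, r β]`. Since the coadjoint action is a Lie algebra action, the
Jacobiator of the `r`-bracket then expands into commutators of coadjoint operators which cancel
in the cyclic sum. -/

/-- The coadjoint action of `x : L` on the dual: `⟨coad x α, y⟩ = -⟨α, [x,y]⟩`. -/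
noncomputable def coad {L : Type*} [LieRing L] [LieAlgebra ℝ L]
    (x : L) (α : Module.Dual ℝ L) : Module.Dual ℝ L :=
  -(α ∘ₗ (LieAlgebra.ad ℝ L x))

/-- The `r`-bracket `[α,β]_r = ad*_{r α} β - ad*_{r β} α` on the dual. -/
noncomputable def rb {L : Type*} [LieRing L] [LieAlgebra ℝ L]
    (r : Module.Dual ℝ L →ₗ[ℝ] L) (α β : Module.Dual ℝ L) : Module.Dual ℝ L :=
  coad (r α) β - coad (r β) α

/-- `[r,r](α,β,γ) := ⟨γ,[r α, r β]⟩ + ⟨α,[r β, r γ]⟩ + ⟨β,[r γ, r α]⟩`. -/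
def cybe {L : Type*} [LieRing L] [LieAlgebra ℝ L]
    (r : Module.Dual ℝ L →ₗ[ℝ] L) (α β γ : Module.Dual ℝ L) : ℝ :=
  γ ⁅r α, r β⁆ + α ⁅r β, r γ⁆ + β ⁅r γ, r α⁆

section

variable {L : Type*} [LieRing L] [LieAlgebra ℝ L]

@[simp]
lemma coad_apply (x y : L) (α : Module.Dual ℝ L) : coad x α y = -α ⁅x, y⁆ := by
  simp [coad]

lemma coad_sub (x : L) (α β : Module.Dual ℝ L) : coad x (α - β) = coad x α - coad x β := by
  ext y
  simp only [coad_apply, LinearMap.sub_apply]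
  ring

lemma coad_lie (x y : L) (α : Module.Dual ℝ L) :
    coad ⁅x, y⁆ α = coad x (coad y α) - coad y (coad x α) := by
  ext z
  simp only [coad_apply, LinearMap.sub_apply, neg_neg, leibniz_lie x y z, map_add]
  ring

lemma rb_apply (r : Module.Dual ℝ L →ₗ[ℝ] L) (α β : Module.Dual ℝ L) (x : L) :
    rb r α β x = α ⁅r β, x⁆ - β ⁅r α, x⁆ := by
  simp only [rb, LinearMap.sub_apply, coad_apply]
  ring

lemma rb_anticomm (r : Module.Dual ℝ L →ₗ[ℝ] L) (α β : Module.Dual ℝ L) :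
    rb r α β = -rb r β α :=
  (neg_sub _ _).symm

lemma apply_rb_eq_lie (r : Module.Dual ℝ L →ₗ[ℝ] L)
    (hskew : ∀ α β : Module.Dual ℝ L, α (r β) = -β (r α))
    (hcybe : ∀ α β γ : Module.Dual ℝ L, cybe r α β γ = 0) (α β : Module.Dual ℝ L) :
    r (rb r α β) = ⁅r α, r β⁆ := by
  refine Module.eval_apply_injective ℝ (LinearMap.ext fun γ ↦ ?_)
  have hcybe := hcybe α β γ
  rw [cybe, ← lie_skew (r γ)] at hcybe
  simp only [Module.Dual.eval_apply, hskew γ, rb_apply, map_neg] at hcybe ⊢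
  linarith

lemma rb_jacobi_of_apply_rb_eq_lie (r : Module.Dual ℝ L →ₗ[ℝ] L)
    (hr : ∀ α β : Module.Dual ℝ L, r (rb r α β) = ⁅r α, r β⁆) (α β γ : Module.Dual ℝ L) :
    rb r (rb r α β) γ + rb r (rb r β γ) α + rb r (rb r γ α) β = 0 := by
  have rb_rb : ∀ α β γ, rb r (rb r α β) γ = coad ⁅r α, r β⁆ γ - coad (r γ) (rb r α β) :=
    fun α β γ ↦ by rw [rb, hr]
  rw [rb_rb, rb_rb, rb_rb]
  simp only [rb, coad_lie, coad_sub]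
  abel

end

theorem stmt3_general {L : Type*} [LieRing L] [LieAlgebra ℝ L]
    (r : Module.Dual ℝ L →ₗ[ℝ] L)
    (hskew : ∀ α β : Module.Dual ℝ L, α (r β) = - β (r α))
    (hcybe : ∀ α β γ : Module.Dual ℝ L, cybe r α β γ = 0) :
    (∀ α α' β : Module.Dual ℝ L, rb r (α + α') β = rb r α β + rb r α' β) ∧
    (∀ (c : ℝ) (α β : Module.Dual ℝ L), rb r (c • α) β = c • rb r α β) ∧
    (∀ α β β' : Module.Dual ℝ L, rb r α (β + β') = rb r α β + rb r α β') ∧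
    (∀ (c : ℝ) (α β : Module.Dual ℝ L), rb r α (c • β) = c • rb r α β) ∧
    (∀ α β : Module.Dual ℝ L, rb r α β = - rb r β α) ∧
    (∀ α β γ : Module.Dual ℝ L,
      rb r (rb r α β) γ + rb r (rb r β γ) α + rb r (rb r γ α) β = 0) := by
  refine ⟨fun α α' β ↦ ?_, fun c α β ↦ ?_, fun α β β' ↦ ?_, fun c α β ↦ ?_,
    rb_anticomm r, rb_jacobi_of_apply_rb_eq_lie r (apply_rb_eq_lie r hskew hcybe)⟩ <;>
  ext x <;> simp only [rb_apply, map_add, map_smul, LinearMap.add_apply, LinearMap.smul_apply,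
    smul_lie, smul_eq_mul, add_lie] <;> ring

/-- for a skew-symmetric solution `r` of the CYBE, the `r`-bracket is a
Lie bracket on `𝔤*`: bilinear, antisymmetric, and satisfying the Jacobi identity. -/
theorem stmt3 {L : Type*} [LieRing L] [LieAlgebra ℝ L] [FiniteDimensional ℝ L]
    (r : Module.Dual ℝ L →ₗ[ℝ] L)
    (hskew : ∀ α β : Module.Dual ℝ L, α (r β) = - β (r α))
    (hcybe : ∀ α β γ : Module.Dual ℝ L, cybe r α β γ = 0) :
    (∀ α α' β : Module.Dual ℝ L, rb r (α + α') β = rb r α β + rb r α' β) ∧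
    (∀ (c : ℝ) (α β : Module.Dual ℝ L), rb r (c • α) β = c • rb r α β) ∧
    (∀ α β β' : Module.Dual ℝ L, rb r α (β + β') = rb r α β + rb r α β') ∧
    (∀ (c : ℝ) (α β : Module.Dual ℝ L), rb r α (c • β) = c • rb r α β) ∧
    (∀ α β : Module.Dual ℝ L, rb r α β = - rb r β α) ∧
    (∀ α β γ : Module.Dual ℝ L,
      rb r (rb r α β) γ + rb r (rb r β γ) α + rb r (rb r γ α) β = 0) :=
  stmt3_general r hskew hcybe
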